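/- arXiv:2409.05763 — 3 statements merged into one kernel-verified Lean document; each statement's English description precedes it below -/
import Mathlib

section
/- Let B be a category with finite products equipped with a CLA structure. Then the additive maps form a wide subcategory B⁺ of B (identities are additive and additive maps are closed under composition); B⁺ has finite biproducts, where the terminal object of B is a zero object of B⁺ and, for objects X, Y, the product X ⨯ Y is a biproduct of X and Y in B⁺ with coproduct injections ⟨id_X, 0⟩ : X → X ⨯ Y and ⟨0, id_Y⟩ : Y → X ⨯ Y; and the inclusion functor B⁺ ⥤ B is bijective on objects and preserves and reflects finite products. -/
/-!
Each hom-set `A ⟶ X` is a commutative monoid under `hadd`, and precomposition is a monoid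
morphism. Because the monoid on `X ⊗ Y` is the product monoid, additivity of a map into a
product can be checked after composing with the projections, which gives both the product
in `B⁺` and the reflection of products. The copairing of `f` and `g` is
`fst ≫ f + snd ≫ g`; it is unique since `fst ≫ ⟨𝟙, 0⟩ + snd ≫ ⟨0, 𝟙⟩ = 𝟙`, which an additive map
carries to the sum of its restrictions along the injections.
-/

open CategoryTheory MonoidalCategory CategoryTheory.CartesianMonoidalCategory
  CategoryTheory.SemiCartesianMonoidalCategory

universe v u

/-- A cartesian left-additive (CLA) structure on a category with chosen finite products:
each object carries a chosen commutative monoid structure, compatibly with products. -/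
class CLA (B : Type u) [Category.{v} B] [CartesianMonoidalCategory B] where
  zero : ∀ X : B, 𝟙_ B ⟶ X
  add : ∀ X : B, X ⊗ X ⟶ X
  zero_add : ∀ X : B, lift (toUnit X ≫ zero X) (𝟙 X) ≫ add X = 𝟙 X
  add_zero : ∀ X : B, lift (𝟙 X) (toUnit X ≫ zero X) ≫ add X = 𝟙 X
  add_comm : ∀ X : B, lift (snd X X) (fst X X) ≫ add X = add X
  add_assoc : ∀ X : B,
    lift (fst (X ⊗ X) X ≫ add X) (snd (X ⊗ X) X) ≫ add X =
      lift (fst (X ⊗ X) X ≫ fst X X)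
        (lift (fst (X ⊗ X) X ≫ snd X X) (snd (X ⊗ X) X) ≫ add X) ≫ add X
  zero_tensor : ∀ X Y : B, zero (X ⊗ Y) = lift (zero X) (zero Y)
  add_tensor : ∀ X Y : B, add (X ⊗ Y) =
    lift (lift (fst (X ⊗ Y) (X ⊗ Y) ≫ fst X Y) (snd (X ⊗ Y) (X ⊗ Y) ≫ fst X Y) ≫ add X)
         (lift (fst (X ⊗ Y) (X ⊗ Y) ≫ snd X Y) (snd (X ⊗ Y) (X ⊗ Y) ≫ snd X Y) ≫ add Y)

variable {B : Type u} [Category.{v} B] [CartesianMonoidalCategory B] [CLA B]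

/-- The sum of two parallel maps, using the chosen monoid structure on the codomain. -/
def hadd {A X : B} (f g : A ⟶ X) : A ⟶ X := lift f g ≫ CLA.add X

/-- The zero map, using the chosen monoid structure on the codomain. -/
def hzero (A X : B) : A ⟶ X := toUnit A ≫ CLA.zero X

/-- A map `h : A ⊗ B' ⟶ A'` is additive in its second component. -/
def AddSnd {A B' A' : B} (h : A ⊗ B' ⟶ A') : Prop :=
  (∀ (X : B) (a : X ⟶ A) (u v : X ⟶ B'),
    lift a (hadd u v) ≫ h = hadd (lift a u ≫ h) (lift a v ≫ h)) ∧
  (∀ (X : B) (a : X ⟶ A), lift a (hzero X B') ≫ h = hzero X A')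

/-- A map of a CLA category is additive if it preserves the (generalized-element) addition
and zero. -/
def IsAdd {X Y : B} (f : X ⟶ Y) : Prop :=
  (∀ (A : B) (g h : A ⟶ X), hadd g h ≫ f = hadd (g ≫ f) (h ≫ f)) ∧
  (∀ A : B, hzero A X ≫ f = hzero A Y)


section HomMonoid

variable {A A' X Y : B}

lemma comp_hadd (k : A' ⟶ A) (f g : A ⟶ X) : k ≫ hadd f g = hadd (k ≫ f) (k ≫ g) := by
  simp only [hadd, comp_lift_assoc]

lemma comp_hzero (k : A' ⟶ A) : k ≫ hzero A X = hzero A' X := by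
  simp only [hzero, ← Category.assoc, toUnit_unique (k ≫ toUnit A) (toUnit A')]

lemma hadd_hzero (f : A ⟶ X) : hadd f (hzero A X) = f := by
  simpa [hadd, hzero, comp_lift_assoc] using f ≫= CLA.add_zero X

lemma hzero_hadd (f : A ⟶ X) : hadd (hzero A X) f = f := by
  simpa [hadd, hzero, comp_lift_assoc] using f ≫= CLA.zero_add X

lemma hadd_comm (f g : A ⟶ X) : hadd f g = hadd g f := by
  simpa [hadd, comp_lift_assoc] using (lift f g ≫= CLA.add_comm X).symm

lemma hadd_assoc (f g h : A ⟶ X) : hadd (hadd f g) h = hadd f (hadd g h) := by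
  simpa [hadd, comp_lift_assoc] using lift (lift f g) h ≫= CLA.add_assoc X

lemma hadd_hadd_hadd_comm (a b c d : A ⟶ X) :
    hadd (hadd a b) (hadd c d) = hadd (hadd a c) (hadd b d) := by
  rw [hadd_assoc, ← hadd_assoc b, hadd_comm b c, hadd_assoc c, ← hadd_assoc]

lemma hzero_tensor : hzero A (X ⊗ Y) = lift (hzero A X) (hzero A Y) := by
  rw [hzero, CLA.zero_tensor, comp_lift, hzero, hzero]

lemma hadd_lift_lift (a c : A ⟶ X) (b d : A ⟶ Y) :
    hadd (lift a b) (lift c d) = lift (hadd a c) (hadd b d) := by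
  simp [hadd, CLA.add_tensor]

end HomMonoid

section Additive

variable {W X Y Z : B}

lemma isAdd_id (X : B) : IsAdd (𝟙 X) :=
  ⟨fun _ _ _ => by simp only [Category.comp_id], fun _ => Category.comp_id _⟩

lemma IsAdd.comp {f : X ⟶ Y} {g : Y ⟶ Z} (hf : IsAdd f) (hg : IsAdd g) : IsAdd (f ≫ g) :=
  ⟨fun A u v => by rw [← Category.assoc, hf.1, hg.1, Category.assoc, Category.assoc],
   fun A => by rw [← Category.assoc, hf.2, hg.2]⟩

lemma isAdd_hzero (X Y : B) : IsAdd (hzero X Y) :=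
  ⟨fun _ _ _ => by rw [comp_hzero, comp_hzero, comp_hzero, hadd_hzero], fun _ => comp_hzero _⟩

lemma IsAdd.hadd {f g : X ⟶ Y} (hf : IsAdd f) (hg : IsAdd g) : IsAdd (hadd f g) :=
  ⟨fun A u v => by rw [comp_hadd, hf.1, hg.1, hadd_hadd_hadd_comm, ← comp_hadd, ← comp_hadd],
   fun A => by rw [comp_hadd, hf.2, hg.2, hadd_hzero]⟩

lemma isAdd_of_subsingleton (hZ : ∀ {A : B} (u v : A ⟶ Z), u = v) (f : W ⟶ Z) : IsAdd f :=
  ⟨fun _ _ _ => hZ _ _, fun _ => hZ _ _⟩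

lemma IsAdd.eq_hzero_of_unit {f : 𝟙_ B ⟶ X} (hf : IsAdd f) : f = hzero (𝟙_ B) X := by
  simpa [toUnit_unique (hzero (𝟙_ B) (𝟙_ B)) (𝟙 _)] using hf.2 (𝟙_ B)

/-- Both sides of each additivity equation for `h` agree after composing with `p` and with
`q`. -/
lemma IsAdd.of_comp_of_jointly_mono {p : Z ⟶ X} {q : Z ⟶ Y} (hp : IsAdd p) (hq : IsAdd q)
    (hpq : ∀ {A : B} (a b : A ⟶ Z), a ≫ p = b ≫ p → a ≫ q = b ≫ q → a = b)
    {h : W ⟶ Z} (hhp : IsAdd (h ≫ p)) (hhq : IsAdd (h ≫ q)) : IsAdd h := by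
  refine ⟨fun A u v => hpq _ _ ?_ ?_, fun A => hpq _ _ ?_ ?_⟩
  · rw [Category.assoc, hhp.1, hp.1, Category.assoc, Category.assoc]
  · rw [Category.assoc, hhq.1, hq.1, Category.assoc, Category.assoc]
  · rw [Category.assoc, hhp.2, hp.2]
  · rw [Category.assoc, hhq.2, hq.2]

lemma isAdd_fst (X Y : B) : IsAdd (fst X Y) :=
  ⟨fun _ g h => by
      rw [← lift_comp_fst_snd g, ← lift_comp_fst_snd h, hadd_lift_lift]
      simp only [lift_fst],
   fun _ => by rw [hzero_tensor, lift_fst]⟩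

lemma isAdd_snd (X Y : B) : IsAdd (snd X Y) :=
  ⟨fun _ g h => by
      rw [← lift_comp_fst_snd g, ← lift_comp_fst_snd h, hadd_lift_lift]
      simp only [lift_snd],
   fun _ => by rw [hzero_tensor, lift_snd]⟩

lemma IsAdd.lift {f : W ⟶ X} {g : W ⟶ Y} (hf : IsAdd f) (hg : IsAdd g) : IsAdd (lift f g) :=
  (isAdd_fst X Y).of_comp_of_jointly_mono (isAdd_snd X Y) (fun _ _ => hom_ext _ _)
    (by rwa [lift_fst]) (by rwa [lift_snd])

end Additive

section Coproduct

variable {X Y W : B}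

def copair (f : X ⟶ W) (g : Y ⟶ W) : X ⊗ Y ⟶ W := hadd (fst X Y ≫ f) (snd X Y ≫ g)

lemma IsAdd.copair {f : X ⟶ W} {g : Y ⟶ W} (hf : IsAdd f) (hg : IsAdd g) :
    IsAdd (copair f g) :=
  ((isAdd_fst X Y).comp hf).hadd ((isAdd_snd X Y).comp hg)

lemma inl_copair (f : X ⟶ W) {g : Y ⟶ W} (hg : IsAdd g) :
    lift (𝟙 X) (hzero X Y) ≫ copair f g = f := by
  rw [copair, comp_hadd, lift_fst_assoc, lift_snd_assoc, Category.id_comp, hg.2, hadd_hzero]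

lemma inr_copair {f : X ⟶ W} (hf : IsAdd f) (g : Y ⟶ W) :
    lift (hzero Y X) (𝟙 Y) ≫ copair f g = g := by
  rw [copair, comp_hadd, lift_fst_assoc, lift_snd_assoc, Category.id_comp, hf.2, hzero_hadd]

lemma copair_inl_inr (X Y : B) :
    copair (lift (𝟙 X) (hzero X Y)) (lift (hzero Y X) (𝟙 Y)) = 𝟙 (X ⊗ Y) := by
  rw [copair, comp_lift, comp_lift, Category.comp_id, Category.comp_id, comp_hzero, comp_hzero,
    hadd_lift_lift, hadd_hzero, hzero_hadd, lift_fst_snd]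

lemma eq_copair_of_isAdd {h : X ⊗ Y ⟶ W} (hh : IsAdd h) :
    h = copair (lift (𝟙 X) (hzero X Y) ≫ h) (lift (hzero Y X) (𝟙 Y) ≫ h) := by
  conv_lhs => rw [← Category.id_comp h, ← copair_inl_inr, copair, hh.1]
  simp only [copair, Category.assoc]

end Coproduct

/-- In a CLA category `B`, the additive maps form a wide subcategory `B⁺` which has finite
biproducts: the terminal object is a zero object of `B⁺`, and `X ⊗ Y` is a biproduct of `X`
and `Y` in `B⁺`; the inclusion `B⁺ ⥤ B` preserves and reflects finite products. -/
theorem additive_maps_wide_subcategory_biproducts :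
    -- identities are additive and additive maps are closed under composition
    (∀ X : B, IsAdd (𝟙 X)) ∧
    (∀ (X Y Z : B) (f : X ⟶ Y) (g : Y ⟶ Z), IsAdd f → IsAdd g → IsAdd (f ≫ g)) ∧
    -- the terminal object of `B` is a zero object of `B⁺`
    (∀ X : B, ∃! f : X ⟶ 𝟙_ B, IsAdd f) ∧
    (∀ X : B, ∃! f : 𝟙_ B ⟶ X, IsAdd f) ∧
    -- the projections are additive, and `X ⊗ Y` is a product of `X` and `Y` in `B⁺`
    (∀ X Y : B, IsAdd (fst X Y) ∧ IsAdd (snd X Y)) ∧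
    (∀ (X Y W : B) (f : W ⟶ X) (g : W ⟶ Y), IsAdd f → IsAdd g →
      ∃! h : W ⟶ X ⊗ Y, IsAdd h ∧ h ≫ fst X Y = f ∧ h ≫ snd X Y = g) ∧
    -- the injections `⟨id, 0⟩`, `⟨0, id⟩` are additive, and `X ⊗ Y` is a coproduct of `X`
    -- and `Y` in `B⁺` via them
    (∀ X Y : B, IsAdd (lift (𝟙 X) (hzero X Y)) ∧ IsAdd (lift (hzero Y X) (𝟙 Y))) ∧
    (∀ (X Y W : B) (f : X ⟶ W) (g : Y ⟶ W), IsAdd f → IsAdd g →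
      ∃! h : X ⊗ Y ⟶ W, IsAdd h ∧
        lift (𝟙 X) (hzero X Y) ≫ h = f ∧ lift (hzero Y X) (𝟙 Y) ≫ h = g) ∧
    -- the inclusion `B⁺ ⥤ B` reflects finite products
    (∀ (X Y Z : B) (p : Z ⟶ X) (q : Z ⟶ Y), IsAdd p → IsAdd q →
      (∀ (W : B) (f : W ⟶ X) (g : W ⟶ Y), ∃! h : W ⟶ Z, h ≫ p = f ∧ h ≫ q = g) →
      (∀ (W : B) (f : W ⟶ X) (g : W ⟶ Y), IsAdd f → IsAdd g →
        ∃! h : W ⟶ Z, IsAdd h ∧ h ≫ p = f ∧ h ≫ q = g)) ∧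
    (∀ Z : B, (∀ W : B, ∃! f : W ⟶ Z, f = f) →
      (∀ W : B, ∃! f : W ⟶ Z, IsAdd f)) := by
  refine ⟨isAdd_id, fun _ _ _ _ _ hf hg => hf.comp hg, ?_, ?_,
    fun X Y => ⟨isAdd_fst X Y, isAdd_snd X Y⟩, ?_,
    fun X Y => ⟨(isAdd_id X).lift (isAdd_hzero X Y), (isAdd_hzero Y X).lift (isAdd_id Y)⟩,
    ?_, ?_, ?_⟩
  · exact fun X => ⟨toUnit X, isAdd_of_subsingleton (fun _ _ => toUnit_unique _ _) _,
      fun _ _ => toUnit_unique _ _⟩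
  · exact fun X => ⟨hzero _ X, isAdd_hzero _ X, fun _ hf => hf.eq_hzero_of_unit⟩
  · intro X Y W f g hf hg
    refine ⟨lift f g, ⟨hf.lift hg, lift_fst f g, lift_snd f g⟩, fun h ⟨_, hfst, hsnd⟩ => ?_⟩
    exact hom_ext _ _ (by rw [lift_fst, hfst]) (by rw [lift_snd, hsnd])
  · intro X Y W f g hf hg
    refine ⟨copair f g, ⟨hf.copair hg, inl_copair f hg, inr_copair hf g⟩,
      fun h ⟨hh, hinl, hinr⟩ => ?_⟩
    rw [eq_copair_of_isAdd hh, hinl, hinr]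
  · intro X Y Z p q hp hq huniv W f g hf hg
    obtain ⟨h, ⟨hhp, hhq⟩, huniq⟩ := huniv W f g
    have hpq : ∀ {A : B} (a b : A ⟶ Z), a ≫ p = b ≫ p → a ≫ q = b ≫ q → a = b :=
      fun _ b hap haq => (huniv _ (b ≫ p) (b ≫ q)).unique ⟨hap, haq⟩ ⟨rfl, rfl⟩
    exact ⟨h, ⟨hp.of_comp_of_jointly_mono hq hpq (hhp ▸ hf) (hhq ▸ hg), hhp, hhq⟩,
      fun k hk => huniq k hk.2⟩
  · intro Z hZ W
    have hall : ∀ {A : B} (u v : A ⟶ Z), u = v := fun _ _ => (hZ _).unique rfl rfl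
    obtain ⟨f, -⟩ := hZ W
    exact ⟨f, isAdd_of_subsingleton hall f, fun g _ => hall g f⟩
end

section
/- Let B be a category with finite products. The functor simp : S(B) ⥤ B is a Grothendieck fibration: for every object (B₀, B') of S(B) and every morphism f : A ⟶ B₀ of B, the morphism (f, π₁) : (A, B') → (B₀, B') (with π₁ : A ⨯ B' → B' the second projection) is cartesian over f, i.e. for every morphism (g, g♭) : (X, X') → (B₀, B') in S(B) and every h : X ⟶ A in B with f ∘ h = g, there is a unique morphism (h, h♭) : (X, X') → (A, B') lying over h whose composite with (f, π₁) equals (g, g♭). -/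
open CategoryTheory CategoryTheory.Limits

universe v u

variable (B : Type u) [Category.{v} B] [HasFiniteProducts B]

/-- Objects of the simple category `S(B)`: pairs of objects of `B`. -/
structure SObj where
  base : B
  fib : B

variable {B}

/-- Morphisms of the simple category `S(B)`. -/
@[ext]
structure SHom (M N : SObj B) where
  f : M.base ⟶ N.base
  fb : M.base ⨯ M.fib ⟶ N.fib

/-- The simple category `S(B)` of a category with finite products. -/
noncomputable instance : Category (SObj B) where
  Hom := SHom
  id M := ⟨𝟙 M.base, prod.snd⟩
  comp u v := ⟨u.f ≫ v.f, prod.lift (prod.fst ≫ u.f) u.fb ≫ v.fb⟩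
  id_comp u := by
    apply SHom.ext
    · simp [CategoryStruct.comp, CategoryStruct.id]
    · simp [CategoryStruct.comp, CategoryStruct.id]
  comp_id u := by
    apply SHom.ext
    · simp [CategoryStruct.comp, CategoryStruct.id]
    · simp [CategoryStruct.comp, CategoryStruct.id]
      exact prod.lift_snd _ _
  assoc u v w := by
    apply SHom.ext
    · simp [CategoryStruct.comp]
    · simp [CategoryStruct.comp, prod.comp_lift_assoc, prod.comp_lift]
      congr 2
      exact (Category.assoc _ _ _).symm.trans (prod.lift_fst_assoc _ _ _).symm

theorem test : True := trivial

theorem SHom.comp_mk_snd {M N : SObj B} {D : B} (u : M ⟶ N) (f : N.base ⟶ D) :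
    u ≫ (SHom.mk f prod.snd : N ⟶ SObj.mk D N.fib) =
      (SHom.mk (u.f ≫ f) u.fb : M ⟶ SObj.mk D N.fib) :=
  SHom.ext rfl (prod.lift_snd _ _)

/-- The simple functor `simp : S(B) ⥤ B` is a Grothendieck fibration: for every object
`(B₀, B')` of `S(B)` and every `f : A ⟶ B₀`, the morphism `(f, π₁) : (A, B') → (B₀, B')` is
cartesian over `f`: for every morphism `(g, g♭) : (X, X') → (B₀, B')` and every `h : X ⟶ A`
with `f ∘ h = g`, there is a unique morphism `(X, X') → (A, B')` lying over `h` whose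
composite with `(f, π₁)` is `(g, g♭)`. -/
theorem simp_isFibration (B₀ B' A : B) (f : A ⟶ B₀)
    (X X' : B) (g : X ⟶ B₀) (gb : X ⨯ X' ⟶ B') (h : X ⟶ A)
    (hfac : h ≫ f = g) :
    ∃! u : SObj.mk X X' ⟶ SObj.mk A B',
      u.f = h ∧
      u ≫ (SHom.mk f prod.snd : SObj.mk A B' ⟶ SObj.mk B₀ B') = SHom.mk g gb := by
  refine ⟨⟨h, gb⟩, ⟨rfl, by rw [SHom.comp_mk_snd, hfac]⟩, ?_⟩
  rintro u ⟨rfl, hu⟩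
  rw [SHom.comp_mk_snd] at hu
  exact SHom.ext rfl (SHom.mk.inj hu).2
end

section
/- Let B be a category with finite products, T : B ⥤ B a finite-product-preserving endofunctor, and p : T ⟶ 𝟭_B a natural transformation. If X and Y are objects with trivializations t_X and t_Y, then X ⨯ Y admits a trivialization t_{X⨯Y}, given by the composite of the canonical isomorphism T(X ⨯ Y) ≅ T X ⨯ T Y, the isomorphism t_X ⨯ t_Y : T X ⨯ T Y ≅ (X ⨯ X) ⨯ (Y ⨯ Y), and the middle-interchange isomorphism (X ⨯ X) ⨯ (Y ⨯ Y) ≅ (X ⨯ Y) ⨯ (X ⨯ Y), and with respect to t_{X⨯Y}, t_X, t_Y the product projections X ⨯ Y → X and X ⨯ Y → Y are T-linear. -/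
/-!
The first component of the composite trivialization is the comparison map followed by
`p_X ⨯ p_Y`, which is `p_{X ⨯ Y}` by naturality of `p`. The projections are linear because
the middle interchange followed by `π ⨯ π` is the projection `π`, and `T π` factors through
the comparison map followed by `π`.
-/

open CategoryTheory CategoryTheory.Limits

universe v u

variable {B : Type u} [Category.{v} B] [HasFiniteProducts B]

structure Triv (T : B ⥤ B) (p : T ⟶ 𝟭 B) (X : B) where
  iso : T.obj X ≅ X ⨯ X
  hom_fst : iso.hom ≫ prod.fst = p.app X

def TLinear {T : B ⥤ B} {p : T ⟶ 𝟭 B} {X Y : B}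
    (tX : Triv T p X) (tY : Triv T p Y) (f : X ⟶ Y) : Prop :=
  T.map f ≫ tY.iso.hom = tX.iso.hom ≫ prod.map f f

section BinaryProducts

variable {C : Type*} [Category C] [HasBinaryProducts C]

noncomputable def prod.interchange (X Y : C) : (X ⨯ X) ⨯ (Y ⨯ Y) ≅ (X ⨯ Y) ⨯ (X ⨯ Y) where
  hom := prod.lift (prod.map prod.fst prod.fst) (prod.map prod.snd prod.snd)
  inv := prod.lift (prod.map prod.fst prod.fst) (prod.map prod.snd prod.snd)
  hom_inv_id := by ext <;> simp [prod.lift_fst, prod.lift_snd]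
  inv_hom_id := by ext <;> simp [prod.lift_fst, prod.lift_snd]

theorem prod.interchange_hom_fst (X Y : C) :
    (prod.interchange X Y).hom ≫ prod.fst = prod.map prod.fst prod.fst :=
  prod.lift_fst _ _

theorem prod.interchange_hom_map_fst (X Y : C) :
    (prod.interchange X Y).hom ≫ prod.map prod.fst prod.fst = prod.fst := by
  ext <;> simp [prod.interchange, prod.lift_fst, prod.lift_snd]

theorem prod.interchange_hom_map_snd (X Y : C) :
    (prod.interchange X Y).hom ≫ prod.map prod.snd prod.snd = prod.snd := by
  ext <;> simp [prod.interchange, prod.lift_fst, prod.lift_snd]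

theorem prodComparison_id (X Y : C) : prodComparison (𝟭 C) X Y = 𝟙 (X ⨯ Y) :=
  prod.lift_fst_snd

theorem prodComparison_map_app {F : C ⥤ C} (α : F ⟶ 𝟭 C) (X Y : C) :
    prodComparison F X Y ≫ prod.map (α.app X) (α.app Y) = α.app (X ⨯ Y) := by
  simpa [prodComparison_id] using (prodComparison_natural_of_natTrans (A := X) (B := Y) α).symm

end BinaryProducts

namespace Triv

variable {T : B ⥤ B} [PreservesFiniteProducts T] {p : T ⟶ 𝟭 B} {X Y : B}

noncomputable def prod (tX : Triv T p X) (tY : Triv T p Y) : Triv T p (X ⨯ Y) where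
  iso := PreservesLimitPair.iso T X Y ≪≫ prod.mapIso tX.iso tY.iso ≪≫ prod.interchange X Y
  hom_fst := by
    simp only [Iso.trans_hom, prod.mapIso_hom, Category.assoc, prod.interchange_hom_fst,
      prod.map_map, tX.hom_fst, tY.hom_fst, PreservesLimitPair.iso_hom, prodComparison_map_app]

theorem tLinear_prod_fst (tX : Triv T p X) (tY : Triv T p Y) :
    TLinear (tX.prod tY) tX prod.fst := by
  simp only [TLinear, prod, Iso.trans_hom, prod.mapIso_hom, Category.assoc,
    prod.interchange_hom_map_fst, prod.map_fst, PreservesLimitPair.iso_hom,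
    prodComparison_fst_assoc]

theorem tLinear_prod_snd (tX : Triv T p X) (tY : Triv T p Y) :
    TLinear (tX.prod tY) tY prod.snd := by
  simp only [TLinear, prod, Iso.trans_hom, prod.mapIso_hom, Category.assoc,
    prod.interchange_hom_map_snd, prod.map_snd, PreservesLimitPair.iso_hom,
    prodComparison_snd_assoc]

end Triv

/-- If `T` preserves finite products and `X`, `Y` carry trivializations, then `X ⨯ Y`
carries the canonical trivialization, with respect to which the product projections
are `T`-linear. -/
theorem prod_triv_exists {T : B ⥤ B} [PreservesFiniteProducts T] {p : T ⟶ 𝟭 B} {X Y : B}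
    (tX : Triv T p X) (tY : Triv T p Y) :
    ∃ t : Triv T p (X ⨯ Y),
      t.iso.hom = (PreservesLimitPair.iso T X Y).hom ≫ prod.map tX.iso.hom tY.iso.hom ≫
          prod.lift (prod.map prod.fst prod.fst) (prod.map prod.snd prod.snd) ∧
      TLinear t tX prod.fst ∧ TLinear t tY prod.snd :=
  ⟨tX.prod tY, rfl, tX.tLinear_prod_fst tY, tX.tLinear_prod_snd tY⟩
end
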